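/- arXiv:1703.06610 — 5 statements merged into one kernel-verified Lean document; each statement's English description precedes it below -/
import Mathlib

section
/- The largest real root β of B satisfies β ≥ cθ² + σ̄², with equality if and only if σ_1² = ⋯ = σ_L². -/
open Finset

/-!
The root equation `B β = 0` says that the weighted mean of `(β - σ ℓ)⁻¹` equals `(c θ²)⁻¹`, while
the weighted mean of `β - σ ℓ` is `β - σ̄`. Jensen's inequality for the strictly convex function
`x ↦ x⁻¹` (the weighted AM–HM inequality) gives `(β - σ̄)⁻¹ ≤ (c θ²)⁻¹`, with equality exactly when
all the `β - σ ℓ` coincide.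
-/

theorem strictConvexOn_inv_Ioi : StrictConvexOn ℝ (Set.Ioi 0) fun x : ℝ ↦ x⁻¹ := by
  simpa only [zpow_neg_one] using strictConvexOn_zpow (m := -1) (by decide) (by decide)

section WeightedAMHM

variable {ι : Type*} (s : Finset ι) {w y : ι → ℝ}

theorem inv_weighted_sum_le_weighted_sum_div (hw : ∀ i ∈ s, 0 < w i)
    (hw₁ : ∑ i ∈ s, w i = 1) (hy : ∀ i ∈ s, 0 < y i) :
    (∑ i ∈ s, w i * y i)⁻¹ ≤ ∑ i ∈ s, w i / y i := by
  simpa only [smul_eq_mul, div_eq_mul_inv] using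
    strictConvexOn_inv_Ioi.convexOn.map_sum_le (fun i hi ↦ (hw i hi).le) hw₁ hy

theorem inv_weighted_sum_eq_weighted_sum_div_iff (hw : ∀ i ∈ s, 0 < w i)
    (hw₁ : ∑ i ∈ s, w i = 1) (hy : ∀ i ∈ s, 0 < y i) :
    (∑ i ∈ s, w i * y i)⁻¹ = ∑ i ∈ s, w i / y i ↔ ∀ i ∈ s, ∀ j ∈ s, y i = y j := by
  simpa only [smul_eq_mul, div_eq_mul_inv] using
    strictConvexOn_inv_Ioi.map_sum_eq_iff_of_pos hw hw₁ hy

end WeightedAMHM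

theorem beta_lower_bound_general
    (c θ : ℝ)
    (L : ℕ) (p σ : Fin L → ℝ)
    (hp : ∀ ℓ, 0 < p ℓ) (hpsum : ∑ ℓ, p ℓ = 1)
    (σmax : ℝ) (hmaxle : ∀ ℓ, σ ℓ ≤ σmax)
    (B : ℝ → ℝ) (hB : ∀ x, B x = 1 - c * θ ^ 2 * ∑ ℓ, p ℓ / (x - σ ℓ))
    (β : ℝ) (hβmem : σmax < β) (hβroot : B β = 0) :
    c * θ ^ 2 + (∑ ℓ, p ℓ * σ ℓ) ≤ β ∧
    (β = c * θ ^ 2 + (∑ ℓ, p ℓ * σ ℓ) ↔ (∀ ℓ ℓ' : Fin L, σ ℓ = σ ℓ')) := by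
  have hgap : ∀ ℓ ∈ univ, 0 < β - σ ℓ := fun ℓ _ ↦ sub_pos.2 ((hmaxle ℓ).trans_lt hβmem)
  have hp' : ∀ ℓ ∈ univ, 0 < p ℓ := fun ℓ _ ↦ hp ℓ
  have hmean : ∑ ℓ, p ℓ * (β - σ ℓ) = β - ∑ ℓ, p ℓ * σ ℓ := by
    simp only [mul_sub, sum_sub_distrib, ← sum_mul, hpsum, one_mul]
  have hharm : ∑ ℓ, p ℓ / (β - σ ℓ) = (c * θ ^ 2)⁻¹ := by
    refine eq_inv_of_mul_eq_one_right ?_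
    linarith [hB β]
  have hAMHM := inv_weighted_sum_le_weighted_sum_div univ hp' hpsum hgap
  have hEq := inv_weighted_sum_eq_weighted_sum_div_iff univ hp' hpsum hgap
  rw [hmean, hharm] at hAMHM hEq
  have hm : 0 < β - ∑ ℓ, p ℓ * σ ℓ := hmean ▸ sum_pos (fun ℓ hℓ ↦ mul_pos (hp ℓ) (hgap ℓ hℓ))
    (nonempty_of_sum_ne_zero (hpsum ▸ one_ne_zero))
  have hk : 0 < c * θ ^ 2 := inv_pos.1 ((inv_pos.2 hm).trans_le hAMHM)
  refine ⟨by linarith [(inv_le_inv₀ hm hk).1 hAMHM], ?_⟩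
  rw [inv_inj] at hEq
  rw [← sub_eq_iff_eq_add, hEq]
  simp only [mem_univ, sub_right_inj, forall_const]

/-- `β ≥ cθ² + σ̄²`, with equality iff the noise is homoscedastic. -/
theorem beta_lower_bound
    (c θ : ℝ) (hc : 0 < c) (hθ : 0 < θ)
    (L : ℕ) (hL : 1 ≤ L) (p σ : Fin L → ℝ)
    (hp : ∀ ℓ, 0 < p ℓ) (hpsum : ∑ ℓ, p ℓ = 1)
    (hσ : ∀ ℓ, 0 < σ ℓ)
    (σmax : ℝ) (hmaxle : ∀ ℓ, σ ℓ ≤ σmax) (hmaxmem : ∃ ℓ, σ ℓ = σmax)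
    (B : ℝ → ℝ) (hB : ∀ x, B x = 1 - c * θ ^ 2 * ∑ ℓ, p ℓ / (x - σ ℓ))
    (β : ℝ) (hβmem : σmax < β) (hβroot : B β = 0) :
    c * θ ^ 2 + (∑ ℓ, p ℓ * σ ℓ) ≤ β ∧
    (β = c * θ ^ 2 + (∑ ℓ, p ℓ * σ ℓ) ↔ (∀ ℓ ℓ' : Fin L, σ ℓ = σ ℓ')) :=
  beta_lower_bound_general c θ L p σ hp hpsum σmax hmaxle B hB β hβmem hβroot
end

section
/- The value of A at the largest real root β of B satisfies A(β) ≤ 1 − (1/c)·(σ̄²/θ²)², with equality if and only if σ_1² = ⋯ = σ_L². -/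
/-!
Here `σ ℓ` stands for the noise variance `σ_ℓ²`. Put `d ℓ = β - σ ℓ > 0`. The root equation
`B β = 0` says `∑ p/d = 1/(cθ²)`, which turns the claim into `(σ̄² · ∑ p/d)² ≤ ∑ p (σ/d)²`.
Since `σ` and `1/d` are similarly ordered, the weighted Chebyshev inequality gives
`σ̄² · ∑ p/d ≤ ∑ p σ/d`, and Jensen for the square gives `(∑ p σ/d)² ≤ ∑ p (σ/d)²`.
Both come from the identity `∑ᵢⱼ pᵢpⱼ(fᵢ - fⱼ)(gᵢ - gⱼ) = 2((∑ p)(∑ p f g) - (∑ p f)(∑ p g))`,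
which also shows that equality forces `σ/d`, hence `σ`, to be constant.
-/

open Finset

section WeightedChebyshev

variable {ι R : Type*} [Fintype ι]

theorem sum_sum_mul_sub_mul_sub [CommRing R] (p f g : ι → R) :
    ∑ i, ∑ j, p i * p j * ((f i - f j) * (g i - g j)) =
      2 * ((∑ i, p i) * ∑ i, p i * (f i * g i) - (∑ i, p i * f i) * ∑ i, p i * g i) := by
  set D : ι → ι → R := fun i j => p i * (p j * (f j * g j)) - p i * f i * (p j * g j)
  calc ∑ i, ∑ j, p i * p j * ((f i - f j) * (g i - g j))
      = ∑ i, ∑ j, (D i j + D j i) := by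
        refine sum_congr rfl fun i _ => sum_congr rfl fun j _ => ?_
        simp only [D]; ring
    _ = 2 * ∑ i, ∑ j, D i j := by
        simp only [sum_add_distrib]
        rw [sum_comm (f := fun i j => D j i)]
        ring
    _ = _ := by simp only [D, sum_sub_distrib, sum_mul_sum]

variable [CommRing R] [LinearOrder R] [IsStrictOrderedRing R] {p f g : ι → R}

theorem sum_mul_sum_le_sum_mul_sum_mul (hp : ∀ i, 0 ≤ p i)
    (hfg : ∀ i j, 0 ≤ (f i - f j) * (g i - g j)) :
    (∑ i, p i * f i) * ∑ i, p i * g i ≤ (∑ i, p i) * ∑ i, p i * (f i * g i) := by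
  have hid := sum_sum_mul_sub_mul_sub p f g
  have hsum_nonneg : 0 ≤ ∑ i, ∑ j, p i * p j * ((f i - f j) * (g i - g j)) :=
    sum_nonneg fun i _ => sum_nonneg fun j _ => mul_nonneg (mul_nonneg (hp i) (hp j)) (hfg i j)
  linarith

theorem sum_mul_sum_eq_sum_mul_sum_mul_iff (hp : ∀ i, 0 < p i)
    (hfg : ∀ i j, 0 ≤ (f i - f j) * (g i - g j)) :
    (∑ i, p i * f i) * ∑ i, p i * g i = (∑ i, p i) * ∑ i, p i * (f i * g i) ↔
      ∀ i j, (f i - f j) * (g i - g j) = 0 := by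
  have hterm : ∀ i j, 0 ≤ p i * p j * ((f i - f j) * (g i - g j)) := fun i j =>
    mul_nonneg (mul_pos (hp i) (hp j)).le (hfg i j)
  rw [eq_comm, ← sub_eq_zero, ← mul_right_inj' (two_ne_zero (α := R)), mul_zero,
    ← sum_sum_mul_sub_mul_sub, sum_eq_zero_iff_of_nonneg fun i _ => sum_nonneg fun j _ => hterm i j]
  simp only [mem_univ, forall_const, sum_eq_zero_iff_of_nonneg fun j _ => hterm _ j]
  exact forall₂_congr fun i j => mul_eq_zero_iff_left (mul_pos (hp i) (hp j)).ne'

end WeightedChebyshev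

section

variable {x y β : ℝ}

theorem sub_mul_inv_sub_sub_inv_sub_nonneg (hx : x < β) (hy : y < β) :
    0 ≤ (x - y) * ((β - x)⁻¹ - (β - y)⁻¹) := by
  have hx' := sub_pos.2 hx
  have hy' := sub_pos.2 hy
  have hform : (x - y) * ((β - x)⁻¹ - (β - y)⁻¹) = (x - y) ^ 2 / ((β - x) * (β - y)) := by
    field_simp; ring
  rw [hform]; positivity

theorem eq_of_div_sub_eq_div_sub (hβ : β ≠ 0) (hx : x ≠ β) (hy : y ≠ β)
    (h : x / (β - x) = y / (β - y)) : x = y := by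
  rw [div_eq_div_iff (sub_ne_zero.2 hx.symm) (sub_ne_zero.2 hy.symm)] at h
  exact mul_left_cancel₀ hβ (by linear_combination h)

end

theorem sq_sum_mul_sum_div_sub_le_and_eq_iff {ι : Type*} [Fintype ι] {p σ : ι → ℝ} {β : ℝ}
    (hp : ∀ i, 0 < p i) (hpsum : ∑ i, p i = 1) (hσ : ∀ i, 0 ≤ σ i) (hσβ : ∀ i, σ i < β) :
    ((∑ i, p i * σ i) * ∑ i, p i / (β - σ i)) ^ 2 ≤ ∑ i, p i * σ i ^ 2 / (β - σ i) ^ 2 ∧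
      (((∑ i, p i * σ i) * ∑ i, p i / (β - σ i)) ^ 2 = ∑ i, p i * σ i ^ 2 / (β - σ i) ^ 2 ↔
        ∀ i j, σ i = σ j) := by
  set v : ι → ℝ := fun i => σ i / (β - σ i)
  have hT : ∑ i, p i / (β - σ i) = ∑ i, p i * (β - σ i)⁻¹ := by simp only [div_eq_mul_inv]
  have hS : ∑ i, p i * (σ i * (β - σ i)⁻¹) = ∑ i, p i * v i := by simp only [v, div_eq_mul_inv]
  have hQ : ∑ i, p i * σ i ^ 2 / (β - σ i) ^ 2 = ∑ i, p i * (v i * v i) :=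
    sum_congr rfl fun i _ => by rw [mul_div_assoc, ← div_pow, sq]
  have hσ_similar i j := sub_mul_inv_sub_sub_inv_sub_nonneg (hσβ i) (hσβ j)
  have hv_similar i j : 0 ≤ (v i - v j) * (v i - v j) := mul_self_nonneg _
  have cheb := sum_mul_sum_le_sum_mul_sum_mul (fun i => (hp i).le) hσ_similar
  have jensen := sum_mul_sum_le_sum_mul_sum_mul (fun i => (hp i).le) hv_similar
  rw [hpsum, one_mul, hS] at cheb
  rw [hpsum, one_mul] at jensen
  rw [hT, hQ]
  have hMT : 0 ≤ (∑ i, p i * σ i) * ∑ i, p i * (β - σ i)⁻¹ :=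
    mul_nonneg (sum_nonneg fun i _ => mul_nonneg (hp i).le (hσ i))
      (sum_nonneg fun i _ => mul_nonneg (hp i).le (inv_nonneg.2 (sub_pos.2 (hσβ i)).le))
  have hsq : ((∑ i, p i * σ i) * ∑ i, p i * (β - σ i)⁻¹) ^ 2 ≤ (∑ i, p i * v i) ^ 2 :=
    pow_le_pow_left₀ hMT cheb 2
  refine ⟨by nlinarith, fun heq => ?_, fun hconst => ?_⟩
  · have hv_const := (sum_mul_sum_eq_sum_mul_sum_mul_iff hp hv_similar).1
      (by rw [hpsum, one_mul]; nlinarith)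
    intro i j
    have hβ : β ≠ 0 := ((hσ i).trans_lt (hσβ i)).ne'
    exact eq_of_div_sub_eq_div_sub hβ (hσβ i).ne (hσβ j).ne
      (sub_eq_zero.1 (mul_self_eq_zero.1 (hv_const i j)))
  · have hMT_eq := (sum_mul_sum_eq_sum_mul_sum_mul_iff hp hσ_similar).2
      fun i j => by rw [hconst i j, sub_self, zero_mul]
    have hSS := (sum_mul_sum_eq_sum_mul_sum_mul_iff hp hv_similar).2
      fun i j => by simp only [v, hconst i j, sub_self, zero_mul]
    rw [hpsum, one_mul, hS] at hMT_eq
    rw [hpsum, one_mul] at hSS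
    rw [hMT_eq, sq, hSS]

theorem A_at_beta_upper_bound_general
    (c θ : ℝ) (hc : 0 < c)
    (L : ℕ) (p σ : Fin L → ℝ)
    (hp : ∀ ℓ, 0 < p ℓ) (hpsum : ∑ ℓ, p ℓ = 1)
    (hσ : ∀ ℓ, 0 < σ ℓ)
    (σmax : ℝ) (hmaxle : ∀ ℓ, σ ℓ ≤ σmax)
    (A : ℝ → ℝ) (hA : ∀ x, A x = 1 - c * ∑ ℓ, p ℓ * (σ ℓ) ^ 2 / (x - σ ℓ) ^ 2)
    (B : ℝ → ℝ) (hB : ∀ x, B x = 1 - c * θ ^ 2 * ∑ ℓ, p ℓ / (x - σ ℓ))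
    (β : ℝ) (hβmem : σmax < β) (hβroot : B β = 0) :
    A β ≤ 1 - (1 / c) * ((∑ ℓ, p ℓ * σ ℓ) / θ ^ 2) ^ 2 ∧
    (A β = 1 - (1 / c) * ((∑ ℓ, p ℓ * σ ℓ) / θ ^ 2) ^ 2 ↔ (∀ ℓ ℓ' : Fin L, σ ℓ = σ ℓ')) := by
  have hσβ ℓ : σ ℓ < β := (hmaxle ℓ).trans_lt hβmem
  have hT : ∑ ℓ, p ℓ / (β - σ ℓ) = 1 / (c * θ ^ 2) :=
    eq_one_div_of_mul_eq_one_right (by rw [hB] at hβroot; linarith)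
  have hRHS : 1 - (1 / c) * ((∑ ℓ, p ℓ * σ ℓ) / θ ^ 2) ^ 2 =
      1 - c * ((∑ ℓ, p ℓ * σ ℓ) * ∑ ℓ, p ℓ / (β - σ ℓ)) ^ 2 := by
    rw [hT]; field_simp
  obtain ⟨hle, heq_iff⟩ :=
    sq_sum_mul_sum_div_sub_le_and_eq_iff hp hpsum (fun ℓ => (hσ ℓ).le) hσβ
  rw [hA, hRHS, sub_le_sub_iff_left, mul_le_mul_iff_right₀ hc, sub_right_inj,
    mul_right_inj' hc.ne', eq_comm]
  exact ⟨hle, heq_iff⟩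

/-- `A(β) ≤ 1 − (1/c)(σ̄²/θ²)²`, with equality iff the noise is
homoscedastic. -/
theorem A_at_beta_upper_bound
    (c θ : ℝ) (hc : 0 < c) (hθ : 0 < θ)
    (L : ℕ) (hL : 1 ≤ L) (p σ : Fin L → ℝ)
    (hp : ∀ ℓ, 0 < p ℓ) (hpsum : ∑ ℓ, p ℓ = 1)
    (hσ : ∀ ℓ, 0 < σ ℓ)
    (σmax : ℝ) (hmaxle : ∀ ℓ, σ ℓ ≤ σmax) (hmaxmem : ∃ ℓ, σ ℓ = σmax)
    (A : ℝ → ℝ) (hA : ∀ x, A x = 1 - c * ∑ ℓ, p ℓ * (σ ℓ) ^ 2 / (x - σ ℓ) ^ 2)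
    (B : ℝ → ℝ) (hB : ∀ x, B x = 1 - c * θ ^ 2 * ∑ ℓ, p ℓ / (x - σ ℓ))
    (β : ℝ) (hβmem : σmax < β) (hβroot : B β = 0) :
    A β ≤ 1 - (1 / c) * ((∑ ℓ, p ℓ * σ ℓ) / θ ^ 2) ^ 2 ∧
    (A β = 1 - (1 / c) * ((∑ ℓ, p ℓ * σ ℓ) / θ ^ 2) ^ 2 ↔ (∀ ℓ ℓ' : Fin L, σ ℓ = σ ℓ')) :=
  A_at_beta_upper_bound_general c θ hc L p σ hp hpsum hσ σmax hmaxle A hA B hB β hβmem hβroot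
end

section
/- The largest real root β of B satisfies the identity ∑_{ℓ=1}^L p_ℓ σ_ℓ²/(β − σ_ℓ²) = β/(cθ²) − 1, and consequently ∑_{ℓ=1}^L p_ℓ σ_ℓ²/(β − σ_ℓ²) ≥ σ̄²/(cθ²), with equality if and only if σ_1² = ⋯ = σ_L². -/
open Finset Filter Set Topology

/-- `∑_ℓ p_ℓ σ_ℓ²/(β − σ_ℓ²) = β/(cθ²) − 1`, hence
`∑_ℓ p_ℓ σ_ℓ²/(β − σ_ℓ²) ≥ σ̄²/(cθ²)` with equality iff the noise is homoscedastic. -/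
theorem beta_sum_identity_and_bound
    (c θ : ℝ) (hc : 0 < c) (hθ : 0 < θ)
    (L : ℕ) (hL : 1 ≤ L) (p σ : Fin L → ℝ)
    (hp : ∀ ℓ, 0 < p ℓ) (hpsum : ∑ ℓ, p ℓ = 1)
    (hσ : ∀ ℓ, 0 < σ ℓ)
    (σmax : ℝ) (hmaxle : ∀ ℓ, σ ℓ ≤ σmax) (hmaxmem : ∃ ℓ, σ ℓ = σmax)
    (B : ℝ → ℝ) (hB : ∀ x, B x = 1 - c * θ ^ 2 * ∑ ℓ, p ℓ / (x - σ ℓ))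
    (β : ℝ) (hβmem : σmax < β) (hβroot : B β = 0) :
    (∑ ℓ, p ℓ * σ ℓ / (β - σ ℓ)) = β / (c * θ ^ 2) - 1 ∧
    (∑ ℓ, p ℓ * σ ℓ) / (c * θ ^ 2) ≤ ∑ ℓ, p ℓ * σ ℓ / (β - σ ℓ) ∧
    ((∑ ℓ, p ℓ * σ ℓ / (β - σ ℓ)) = (∑ ℓ, p ℓ * σ ℓ) / (c * θ ^ 2) ↔ (∀ ℓ ℓ' : Fin L, σ ℓ = σ ℓ')) := by
  have hβσ : ∀ ℓ, 0 < β - σ ℓ := fun ℓ => by linarith [hmaxle ℓ]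
  have hcθ : (0:ℝ) < c * θ ^ 2 := by positivity
  have hroot : ∑ ℓ, p ℓ / (β - σ ℓ) = 1 / (c * θ ^ 2) := by
    have h := hβroot
    rw [hB] at h
    field_simp
    linarith
  -- Part 1: the identity
  have h1 : (∑ ℓ, p ℓ * σ ℓ / (β - σ ℓ)) = β / (c * θ ^ 2) - 1 := by
    have hterm : ∀ ℓ ∈ Finset.univ, p ℓ * σ ℓ / (β - σ ℓ)
        = β * (p ℓ / (β - σ ℓ)) - p ℓ := by
      intro ℓ _
      have h := (hβσ ℓ).ne'
      field_simp
      ring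
    rw [Finset.sum_congr rfl hterm, Finset.sum_sub_distrib, ← Finset.mul_sum, hroot, hpsum,
      mul_one_div]
  -- Notation
  set f : Fin L → ℝ := fun ℓ => 1 / (β - σ ℓ) with hf
  clear_value f
  have hfpos : ∀ ℓ, 0 < f ℓ := fun ℓ => by
    rw [hf]; exact div_pos one_pos (hβσ ℓ)
  have hsf : (∑ ℓ, p ℓ * σ ℓ / (β - σ ℓ)) = ∑ ℓ, p ℓ * σ ℓ * f ℓ := by
    apply Finset.sum_congr rfl; intro ℓ _; rw [hf, mul_one_div]
  have hSf : (∑ ℓ, p ℓ * f ℓ) = 1 / (c * θ ^ 2) := by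
    rw [← hroot]; apply Finset.sum_congr rfl; intro ℓ _; rw [hf, mul_one_div]
  -- covariance term is nonneg, zero iff equal
  have hterm_eq : ∀ ℓ ℓ' : Fin L, (σ ℓ - σ ℓ') * (f ℓ - f ℓ')
      = (σ ℓ - σ ℓ') ^ 2 / ((β - σ ℓ) * (β - σ ℓ')) := by
    intro ℓ ℓ'
    have h1 := (hβσ ℓ).ne'
    have h2 := (hβσ ℓ').ne'
    simp only [hf]
    field_simp
    ring
  have hterm_nn : ∀ ℓ ℓ' : Fin L, 0 ≤ p ℓ * p ℓ' * ((σ ℓ - σ ℓ') * (f ℓ - f ℓ')) := by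
    intro ℓ ℓ'
    rw [hterm_eq]
    have := hβσ ℓ; have := hβσ ℓ'; have := hp ℓ; have := hp ℓ'
    positivity
  -- double sum identity
  have hD : (∑ ℓ, ∑ ℓ', p ℓ * p ℓ' * ((σ ℓ - σ ℓ') * (f ℓ - f ℓ')))
      = 2 * ((∑ ℓ, p ℓ * σ ℓ * f ℓ) - (∑ ℓ, p ℓ * σ ℓ) * (∑ ℓ, p ℓ * f ℓ)) := by
    have expand : ∀ ℓ : Fin L, (∑ ℓ', p ℓ * p ℓ' * ((σ ℓ - σ ℓ') * (f ℓ - f ℓ')))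
        = p ℓ * σ ℓ * f ℓ * (∑ ℓ', p ℓ') - p ℓ * σ ℓ * (∑ ℓ', p ℓ' * f ℓ')
          - p ℓ * f ℓ * (∑ ℓ', p ℓ' * σ ℓ') + p ℓ * (∑ ℓ', p ℓ' * σ ℓ' * f ℓ') := by
      intro ℓ
      rw [Finset.mul_sum, Finset.mul_sum, Finset.mul_sum, Finset.mul_sum,
        ← Finset.sum_sub_distrib, ← Finset.sum_sub_distrib, ← Finset.sum_add_distrib]
      apply Finset.sum_congr rfl
      intro ℓ' _
      ring
    rw [Finset.sum_congr rfl (fun ℓ _ => expand ℓ), hpsum]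
    rw [Finset.sum_add_distrib, Finset.sum_sub_distrib, Finset.sum_sub_distrib,
      ← Finset.sum_mul, ← Finset.sum_mul, ← Finset.sum_mul]
    have hlast : (∑ ℓ, p ℓ * (∑ ℓ', p ℓ' * σ ℓ' * f ℓ')) = ∑ ℓ, p ℓ * σ ℓ * f ℓ := by
      rw [← Finset.sum_mul, hpsum, one_mul]
    linarith [hlast]
  have hDnn : 0 ≤ (∑ ℓ, ∑ ℓ', p ℓ * p ℓ' * ((σ ℓ - σ ℓ') * (f ℓ - f ℓ'))) := by
    apply Finset.sum_nonneg; intro ℓ _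
    apply Finset.sum_nonneg; intro ℓ' _
    exact hterm_nn ℓ ℓ'
  -- the bound
  have hbound : (∑ ℓ, p ℓ * σ ℓ) * (∑ ℓ, p ℓ * f ℓ) ≤ ∑ ℓ, p ℓ * σ ℓ * f ℓ := by
    nlinarith [hD, hDnn]
  refine ⟨h1, ?_, ?_⟩
  · rw [hsf]
    calc (∑ ℓ, p ℓ * σ ℓ) / (c * θ ^ 2)
        = (∑ ℓ, p ℓ * σ ℓ) * (∑ ℓ, p ℓ * f ℓ) := by rw [hSf, mul_one_div]
      _ ≤ _ := hbound
  · constructor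
    · intro heq
      have hDzero : (∑ ℓ, ∑ ℓ', p ℓ * p ℓ' * ((σ ℓ - σ ℓ') * (f ℓ - f ℓ'))) = 0 := by
        rw [hD]
        have : (∑ ℓ, p ℓ * σ ℓ * f ℓ) = (∑ ℓ, p ℓ * σ ℓ) * (∑ ℓ, p ℓ * f ℓ) := by
          rw [← hsf, heq, hSf, mul_one_div]
        rw [this]; ring
      intro ℓ ℓ'
      have houter := (Finset.sum_eq_zero_iff_of_nonneg
        (fun ℓ _ => Finset.sum_nonneg (fun ℓ' _ => hterm_nn ℓ ℓ'))).mp hDzero ℓ (Finset.mem_univ ℓ)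
      have hinner := (Finset.sum_eq_zero_iff_of_nonneg
        (fun ℓ' _ => hterm_nn ℓ ℓ')).mp houter ℓ' (Finset.mem_univ ℓ')
      rw [hterm_eq] at hinner
      have hppos : 0 < p ℓ * p ℓ' := mul_pos (hp ℓ) (hp ℓ')
      have hden : 0 < (β - σ ℓ) * (β - σ ℓ') := mul_pos (hβσ ℓ) (hβσ ℓ')
      have hsq : (σ ℓ - σ ℓ') ^ 2 = 0 := by
        by_contra hne
        have h2 : 0 < (σ ℓ - σ ℓ') ^ 2 := lt_of_le_of_ne (sq_nonneg _) (Ne.symm hne)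
        have := mul_pos hppos (div_pos h2 hden)
        linarith
      have := pow_eq_zero_iff (n := 2) (by norm_num) |>.mp hsq
      linarith [sub_eq_zero.mp this]
    · intro hconst
      have ℓ₀ : Fin L := ⟨0, hL⟩
      have hσc : ∀ ℓ, σ ℓ = σ ℓ₀ := fun ℓ => hconst ℓ ℓ₀
      have hfc : ∀ ℓ, f ℓ = f ℓ₀ := fun ℓ => by simp [hf, hσc ℓ]
      have hS1 : (∑ ℓ, p ℓ * σ ℓ * f ℓ) = σ ℓ₀ * f ℓ₀ := by
        calc (∑ ℓ, p ℓ * σ ℓ * f ℓ) = ∑ ℓ, p ℓ * (σ ℓ₀ * f ℓ₀) := by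
              apply Finset.sum_congr rfl; intro ℓ _; rw [hσc ℓ, hfc ℓ]; ring
          _ = σ ℓ₀ * f ℓ₀ := by rw [← Finset.sum_mul, hpsum, one_mul]
      have hS2 : (∑ ℓ, p ℓ * σ ℓ) = σ ℓ₀ := by
        calc (∑ ℓ, p ℓ * σ ℓ) = ∑ ℓ, p ℓ * σ ℓ₀ := by
              apply Finset.sum_congr rfl; intro ℓ _; rw [hσc ℓ]
          _ = σ ℓ₀ := by rw [← Finset.sum_mul, hpsum, one_mul]
      have hS3 : (∑ ℓ, p ℓ * f ℓ) = f ℓ₀ := by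
        calc (∑ ℓ, p ℓ * f ℓ) = ∑ ℓ, p ℓ * f ℓ₀ := by
              apply Finset.sum_congr rfl; intro ℓ _; rw [hfc ℓ]
          _ = f ℓ₀ := by rw [← Finset.sum_mul, hpsum, one_mul]
      rw [hsf, hS1, hS2]
      rw [hS3] at hSf
      rw [hSf, mul_one_div]
end

section
/- If A(β) ≥ 0, where β is the largest real root of B, then the asymptotic subspace recovery expression satisfies A(β)/(β·B′(β)) ≤ (c − σ̄⁴/θ⁴)/(c + σ̄²/θ²), where B′(x) = cθ² ∑_ℓ p_ℓ/(x − σ_ℓ²)², with equality if and only if σ_1² = ⋯ = σ_L². (Homoscedastic noise maximizes the asymptotic subspace recovery for a fixed average noise variance.) -/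
/-! Write `K = cθ²`, `s = ∑ pᵢσᵢ` and `xᵢ = β - σᵢ > 0`, so that the root equation reads
`∑ pᵢ/xᵢ = 1/K`. Jensen for `t ↦ t²` gives `B'(β) = K ∑ pᵢ/xᵢ² ≥ 1/K`; since `θ²A(β)` is
`θ² - K + 2β - β²B'(β)` and is nonnegative, this bounds the recovery by
`g(β) = (Kθ² - (β - K)²)/(θ²β)`, with equality when `B'(β) = 1/K`. Jensen for `t ↦ t⁻¹`
(the harmonic-arithmetic mean inequality) gives `β - s = ∑ pᵢxᵢ ≥ K`, strictly unless all `σᵢ`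
agree. Finally `g` is strictly decreasing on `[K, ∞)` and `g(K + s)` is the right-hand side. -/

open Finset Set

section WeightedMeans

variable {ι : Type*} [Fintype ι] {w x : ι → ℝ}

theorem inv_sum_mul_le_sum_div (hw : ∀ i, 0 ≤ w i) (hw1 : ∑ i, w i = 1) (hx : ∀ i, 0 < x i) :
    (∑ i, w i * x i)⁻¹ ≤ ∑ i, w i / x i := by
  simpa [zpow_neg_one, div_eq_mul_inv] using
    Real.zpow_arith_mean_le_arith_mean_zpow univ w x (fun i _ => hw i) hw1 (fun i _ => hx i) (-1)

theorem inv_sum_mul_lt_sum_div (hw : ∀ i, 0 < w i) (hw1 : ∑ i, w i = 1) (hx : ∀ i, 0 < x i)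
    (hne : ∃ i j, x i ≠ x j) :
    (∑ i, w i * x i)⁻¹ < ∑ i, w i / x i := by
  obtain ⟨i, j, hij⟩ := hne
  simpa [zpow_neg_one, div_eq_mul_inv] using
    (strictConvexOn_zpow (m := -1) (by decide) (by decide)).map_sum_lt (fun i _ => hw i) hw1
      (fun i _ => hx i) ⟨i, mem_univ i, j, mem_univ j, hij⟩

end WeightedMeans

section Root

variable {ι : Type*} [Fintype ι] {p σ : ι → ℝ} {β K : ℝ}

theorem sum_mul_sub_eq_sub_sum_mul (hp1 : ∑ i, p i = 1) :
    ∑ i, p i * (β - σ i) = β - ∑ i, p i * σ i := by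
  simp only [mul_sub, sum_sub_distrib, ← sum_mul, hp1, one_mul]

theorem sum_mul_sq_div_sq_eq (hp1 : ∑ i, p i = 1) (hσβ : ∀ i, σ i ≠ β) :
    ∑ i, p i * σ i ^ 2 / (β - σ i) ^ 2
      = β ^ 2 * ∑ i, p i / (β - σ i) ^ 2 - 2 * β * ∑ i, p i / (β - σ i) + 1 := by
  have hterm (i : ι) : p i * σ i ^ 2 / (β - σ i) ^ 2
      = β ^ 2 * (p i / (β - σ i) ^ 2) - 2 * β * (p i / (β - σ i)) + p i := by
    have := sub_ne_zero.2 (hσβ i).symm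
    field_simp
    ring
  simp only [hterm, sum_add_distrib, sum_sub_distrib, ← mul_sum, hp1]

theorem add_sum_mul_le_of_root (hp : ∀ i, 0 < p i) (hp1 : ∑ i, p i = 1) (hσβ : ∀ i, σ i < β)
    (hK : 0 < K) (hroot : ∑ i, p i / (β - σ i) = K⁻¹) :
    K + ∑ i, p i * σ i ≤ β := by
  have h := inv_sum_mul_le_sum_div (fun i => (hp i).le) hp1 (fun i => sub_pos.2 (hσβ i))
  have hpos : 0 < β - ∑ i, p i * σ i := by
    rw [← sum_mul_sub_eq_sub_sum_mul hp1]
    exact sum_pos (fun i _ => mul_pos (hp i) (sub_pos.2 (hσβ i)))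
      (nonempty_of_sum_ne_zero (hp1 ▸ one_ne_zero))
  rw [hroot, sum_mul_sub_eq_sub_sum_mul hp1, inv_le_inv₀ hpos hK] at h
  linarith

theorem add_sum_mul_lt_of_root (hp : ∀ i, 0 < p i) (hp1 : ∑ i, p i = 1) (hσβ : ∀ i, σ i < β)
    (hK : 0 < K) (hroot : ∑ i, p i / (β - σ i) = K⁻¹) (hne : ∃ i j, σ i ≠ σ j) :
    K + ∑ i, p i * σ i < β := by
  obtain ⟨i, j, hij⟩ := hne
  have h := inv_sum_mul_lt_sum_div hp hp1 (fun i => sub_pos.2 (hσβ i))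
    ⟨i, j, fun h => hij (sub_right_injective h)⟩
  have hpos : 0 < β - ∑ i, p i * σ i := by
    linarith [add_sum_mul_le_of_root hp hp1 hσβ hK hroot]
  rw [hroot, sum_mul_sub_eq_sub_sum_mul hp1, inv_lt_inv₀ hpos hK] at h
  linarith

theorem inv_le_mul_sum_div_sq_of_root (hp : ∀ i, 0 ≤ p i) (hp1 : ∑ i, p i = 1) (hK : 0 < K)
    (hroot : ∑ i, p i / (β - σ i) = K⁻¹) :
    K⁻¹ ≤ K * ∑ i, p i / (β - σ i) ^ 2 := by
  have h := Real.pow_arith_mean_le_arith_mean_pow_of_even univ p (fun i => (β - σ i)⁻¹)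
    (fun i _ => hp i) hp1 even_two
  simp only [← div_eq_mul_inv, inv_pow, hroot] at h
  calc K⁻¹ = K * (K ^ 2)⁻¹ := by field_simp
    _ ≤ K * ∑ i, p i / (β - σ i) ^ 2 := by gcongr

theorem eq_add_sum_mul_of_root (hp1 : ∑ i, p i = 1) (hK : K ≠ 0)
    (hroot : ∑ i, p i / (β - σ i) = K⁻¹) (hσ : ∀ i j, σ i = σ j) :
    β = K + ∑ i, p i * σ i ∧ K * ∑ i, p i / (β - σ i) ^ 2 = K⁻¹ := by
  have hσs (j : ι) : σ j = ∑ i, p i * σ i := by simp only [hσ _ j, ← sum_mul, hp1, one_mul]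
  set s := ∑ i, p i * σ i
  simp only [hσs, ← sum_div, hp1, one_div, inv_inj] at hroot ⊢
  rw [hroot]
  exact ⟨by linarith, by field_simp⟩

end Root

theorem div_mul_le_sub_sq_div {K θ β a r : ℝ} (hK : 0 < K) (hθ : θ ≠ 0) (hβ : 0 < β)
    (ha0 : 0 ≤ a) (hr : K⁻¹ ≤ r) (ha : θ ^ 2 * a = θ ^ 2 - K + 2 * β - β ^ 2 * r) :
    a / (β * r) ≤ (K * θ ^ 2 - (β - K) ^ 2) / (θ ^ 2 * β) := by
  have hr0 : 0 < r := (inv_pos.2 hK).trans_le hr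
  have hKr : 1 ≤ K * r := by rwa [inv_le_iff_one_le_mul₀ hK, mul_comm] at hr
  have hq : 0 ≤ θ ^ 2 - K + 2 * β := by nlinarith [sq_nonneg θ, sq_nonneg β]
  rw [div_le_div_iff₀ (by positivity) (by positivity)]
  nlinarith [mul_nonneg hq (sub_nonneg.2 hKr)]

theorem div_mul_inv_eq_sub_sq_div {K θ β a : ℝ} (hK : K ≠ 0) (hθ : θ ≠ 0) (hβ : β ≠ 0)
    (ha : θ ^ 2 * a = θ ^ 2 - K + 2 * β - β ^ 2 * K⁻¹) :
    a / (β * K⁻¹) = (K * θ ^ 2 - (β - K) ^ 2) / (θ ^ 2 * β) := by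
  field_simp
  linear_combination K * ha - β ^ 2 * mul_inv_cancel₀ hK

theorem strictAntiOn_sub_sq_div {K θ : ℝ} (hK : 0 < K) (hθ : θ ≠ 0) :
    StrictAntiOn (fun x => (K * θ ^ 2 - (x - K) ^ 2) / (θ ^ 2 * x)) (Ici K) := by
  intro u (hu : K ≤ u) x (hx : K ≤ x) hux
  have hu0 : 0 < u := hK.trans_le hu
  have hx0 : 0 < x := hu0.trans hux
  have hθ2 : 0 < θ ^ 2 := by positivity
  have hpos : 0 < K * θ ^ 2 + (u * x - K ^ 2) := by
    nlinarith [mul_le_mul hu hx hK.le hu0.le, mul_pos hK hθ2]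
  rw [div_lt_div_iff₀ (by positivity) (by positivity)]
  -- the cross-multiplied difference factors as `θ² (x - u) (Kθ² + ux - K²)`
  linear_combination θ ^ 2 * (mul_pos (sub_pos.2 hux) hpos)

theorem subspace_recovery_bound_general
    (c θ : ℝ) (hc : 0 < c) (hθ : 0 < θ)
    (L : ℕ) (p σ : Fin L → ℝ)
    (hp : ∀ ℓ, 0 < p ℓ) (hpsum : ∑ ℓ, p ℓ = 1)
    (hσ : ∀ ℓ, 0 < σ ℓ)
    (σmax : ℝ) (hmaxle : ∀ ℓ, σ ℓ ≤ σmax)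
    (A : ℝ → ℝ) (hA : ∀ x, A x = 1 - c * ∑ ℓ, p ℓ * (σ ℓ) ^ 2 / (x - σ ℓ) ^ 2)
    (B : ℝ → ℝ) (hB : ∀ x, B x = 1 - c * θ ^ 2 * ∑ ℓ, p ℓ / (x - σ ℓ))
    (β : ℝ) (hβmem : σmax < β) (hβroot : B β = 0)
    (B' : ℝ → ℝ) (hB' : ∀ x, B' x = c * θ ^ 2 * ∑ ℓ, p ℓ / (x - σ ℓ) ^ 2)
    (hAβ : 0 ≤ A β) :
    A β / (β * B' β) ≤ (c - (∑ ℓ, p ℓ * σ ℓ) ^ 2 / θ ^ 4) / (c + (∑ ℓ, p ℓ * σ ℓ) / θ ^ 2) ∧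
    (A β / (β * B' β) = (c - (∑ ℓ, p ℓ * σ ℓ) ^ 2 / θ ^ 4) / (c + (∑ ℓ, p ℓ * σ ℓ) / θ ^ 2) ↔
      (∀ ℓ ℓ' : Fin L, σ ℓ = σ ℓ')) := by
  set K := c * θ ^ 2
  set s := ∑ ℓ, p ℓ * σ ℓ
  have hK : 0 < K := by positivity
  have hσβ (ℓ) : σ ℓ < β := (hmaxle ℓ).trans_lt hβmem
  have hroot : ∑ ℓ, p ℓ / (β - σ ℓ) = K⁻¹ := by
    rw [hB] at hβroot
    field_simp
    linarith
  have hβK : K + s ≤ β := add_sum_mul_le_of_root hp hpsum hσβ hK hroot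
  have hAβ_eq : θ ^ 2 * A β = θ ^ 2 - K + 2 * β - β ^ 2 * B' β := by
    rw [hA, hB', sum_mul_sq_div_sq_eq hpsum fun ℓ => (hσβ ℓ).ne, hroot]
    field_simp
    ring
  have hRHS : (c - s ^ 2 / θ ^ 4) / (c + s / θ ^ 2)
      = (K * θ ^ 2 - (K + s - K) ^ 2) / (θ ^ 2 * (K + s)) := by
    field_simp
    ring
  have hs_mem : K + s ∈ Ici K :=
    le_add_of_nonneg_right (sum_nonneg fun ℓ _ => (mul_pos (hp ℓ) (hσ ℓ)).le)
  have hβ_mem : β ∈ Ici K := hs_mem.trans hβK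
  have hanti := strictAntiOn_sub_sq_div hK hθ.ne'
  have hbound : A β / (β * B' β) ≤ (K * θ ^ 2 - (β - K) ^ 2) / (θ ^ 2 * β) :=
    div_mul_le_sub_sq_div hK hθ.ne' (hK.trans_le hβ_mem) hAβ
      (hB' β ▸ inv_le_mul_sum_div_sq_of_root (fun ℓ => (hp ℓ).le) hpsum hK hroot) hAβ_eq
  rw [hRHS]
  refine ⟨hbound.trans (hanti.antitoneOn hs_mem hβ_mem hβK), fun heq => ?_, fun hhom => ?_⟩
  · by_contra! hne
    exact (hbound.trans_lt (hanti hs_mem hβ_mem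
      (add_sum_mul_lt_of_root hp hpsum hσβ hK hroot hne))).ne heq
  · obtain ⟨hβs, hr⟩ := eq_add_sum_mul_of_root hpsum hK.ne' hroot hhom
    rw [← hB'] at hr
    rw [hr] at hAβ_eq
    rw [hr, ← hβs]
    exact div_mul_inv_eq_sub_sq_div hK.ne' hθ.ne' (hK.trans_le hβ_mem).ne' hAβ_eq

/-- if `A(β) ≥ 0` then the asymptotic subspace recovery satisfies
`A(β)/(β B′(β)) ≤ (c − σ̄⁴/θ⁴)/(c + σ̄²/θ²)`, with equality iff the noise is
homoscedastic. -/
theorem subspace_recovery_bound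
    (c θ : ℝ) (hc : 0 < c) (hθ : 0 < θ)
    (L : ℕ) (hL : 1 ≤ L) (p σ : Fin L → ℝ)
    (hp : ∀ ℓ, 0 < p ℓ) (hpsum : ∑ ℓ, p ℓ = 1)
    (hσ : ∀ ℓ, 0 < σ ℓ)
    (σmax : ℝ) (hmaxle : ∀ ℓ, σ ℓ ≤ σmax) (hmaxmem : ∃ ℓ, σ ℓ = σmax)
    (A : ℝ → ℝ) (hA : ∀ x, A x = 1 - c * ∑ ℓ, p ℓ * (σ ℓ) ^ 2 / (x - σ ℓ) ^ 2)
    (B : ℝ → ℝ) (hB : ∀ x, B x = 1 - c * θ ^ 2 * ∑ ℓ, p ℓ / (x - σ ℓ))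
    (β : ℝ) (hβmem : σmax < β) (hβroot : B β = 0)
    (B' : ℝ → ℝ) (hB' : ∀ x, B' x = c * θ ^ 2 * ∑ ℓ, p ℓ / (x - σ ℓ) ^ 2)
    (hAβ : 0 ≤ A β) :
    A β / (β * B' β) ≤ (c - (∑ ℓ, p ℓ * σ ℓ) ^ 2 / θ ^ 4) / (c + (∑ ℓ, p ℓ * σ ℓ) / θ ^ 2) ∧
    (A β / (β * B' β) = (c - (∑ ℓ, p ℓ * σ ℓ) ^ 2 / θ ^ 4) / (c + (∑ ℓ, p ℓ * σ ℓ) / θ ^ 2) ↔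
      (∀ ℓ ℓ' : Fin L, σ ℓ = σ ℓ')) :=
  subspace_recovery_bound_general c θ hc hθ L p σ hp hpsum hσ σmax hmaxle A hA B hB β hβmem hβroot
    B' hB' hAβ
end

section
/- If A(β) ≥ 0, where β is the largest real root of B, then β + (1 − c)θ² > θ² > 0 and the asymptotic coefficient recovery expression satisfies A(β)/(c·(β + (1 − c)θ²)·B′(β)) ≤ (c − σ̄⁴/θ⁴)/(c·(1 + σ̄²/θ²)), where B′(x) = cθ² ∑_ℓ p_ℓ/(x − σ_ℓ²)², with equality if and only if σ_1² = ⋯ = σ_L². (Homoscedastic noise maximizes the asymptotic coefficient recovery for a fixed average noise variance.) -/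
/-!
Write `s_ℓ = β - σ_ℓ²`. The root condition `B(β) = 0` says `∑ p_ℓ / s_ℓ = (cθ²)⁻¹`, after
which the recovery ratio depends on `E = ∑ p_ℓ / s_ℓ²` alone and is strictly decreasing in `E`.
Jensen's inequality gives `E ≥ (∑ p_ℓ / s_ℓ)² = (cθ²)⁻²`, with equality iff all `σ_ℓ²` agree,
and at that extreme value the ratio is the homoscedastic recovery at noise level `β - cθ²`.
The harmonic–arithmetic mean inequality gives `σ̄² ≤ β - cθ²`, and the homoscedastic recovery
is decreasing in the noise level.
-/

open Finset Set

section NoiseMoments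

variable {ι : Type*} [Fintype ι] {p σ : ι → ℝ} {β : ℝ}

theorem inv_sum_div_sub_le_sub_sum_mul (hp : ∀ i, 0 < p i) (hp1 : ∑ i, p i = 1)
    (hσ : ∀ i, σ i < β) : (∑ i, p i / (β - σ i))⁻¹ ≤ β - ∑ i, p i * σ i := by
  have hs : ∀ i, 0 < p i * (β - σ i) := fun i => mul_pos (hp i) (sub_pos.2 (hσ i))
  have h := sq_sum_div_le_sum_sq_div univ p fun i _ => hs i
  have hterm : ∀ i, p i ^ 2 / (p i * (β - σ i)) = p i / (β - σ i) := fun i => by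
    rw [sq, mul_div_mul_left _ _ (hp i).ne']
  have hmean : ∑ i, p i * (β - σ i) = β - ∑ i, p i * σ i := by
    simp only [mul_sub, sum_sub_distrib, ← sum_mul, hp1, one_mul]
  simp only [hp1, one_pow, one_div, hterm] at h
  rw [← hmean]
  exact inv_le_of_inv_le₀
    (sum_pos (fun i _ => hs i) (nonempty_of_sum_ne_zero (hp1 ▸ one_ne_zero))) h

theorem sq_sum_div_sub_le (hp : ∀ i, 0 ≤ p i) (hp1 : ∑ i, p i = 1) :
    (∑ i, p i / (β - σ i)) ^ 2 ≤ ∑ i, p i / (β - σ i) ^ 2 := by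
  simpa only [smul_eq_mul, div_eq_mul_inv, inv_pow] using
    (Even.strictConvexOn_pow even_two two_ne_zero).convexOn.map_sum_le (t := univ)
      (p := fun i => (β - σ i)⁻¹) (fun i _ => hp i) hp1 fun i _ => Set.mem_univ _

theorem sq_sum_div_sub_eq_iff (hp : ∀ i, 0 < p i) (hp1 : ∑ i, p i = 1) :
    (∑ i, p i / (β - σ i)) ^ 2 = ∑ i, p i / (β - σ i) ^ 2 ↔ ∀ i j, σ i = σ j := by
  simpa only [smul_eq_mul, div_eq_mul_inv, inv_pow, Finset.mem_univ, forall_const, inv_inj,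
    sub_right_inj] using
    (Even.strictConvexOn_pow even_two two_ne_zero).map_sum_eq_iff_of_pos (t := univ)
      (p := fun i => (β - σ i)⁻¹) (fun i _ => hp i) hp1 fun i _ => Set.mem_univ _

theorem sub_sum_mul_eq_inv_sum_div (hp1 : ∑ i, p i = 1) (hσ : ∀ i j, σ i = σ j) :
    β - ∑ i, p i * σ i = (∑ i, p i / (β - σ i))⁻¹ := by
  obtain ⟨j, -⟩ := nonempty_of_sum_ne_zero (hp1 ▸ one_ne_zero : ∑ i, p i ≠ 0)
  simp only [hσ _ j, ← sum_mul, ← sum_div, hp1, one_mul, one_div, inv_inv]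

theorem sum_mul_sq_div_sub_sq (hp1 : ∑ i, p i = 1) (hσ : ∀ i, β - σ i ≠ 0) :
    ∑ i, p i * σ i ^ 2 / (β - σ i) ^ 2 =
      β ^ 2 * ∑ i, p i / (β - σ i) ^ 2 - 2 * β * ∑ i, p i / (β - σ i) + 1 := by
  rw [mul_sum, mul_sum, ← hp1, ← sum_sub_distrib, ← sum_add_distrib]
  refine sum_congr rfl fun i _ => ?_
  field_simp [hσ i]
  ring

end NoiseMoments

section Recovery

variable {c θ : ℝ}

noncomputable def homoscedasticRecovery (c θ v : ℝ) : ℝ :=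
  (c - v ^ 2 / θ ^ 4) / (c * (1 + v / θ ^ 2))

/-- `A(β) / (c (β + (1 - c)θ²) B'(β))` as a function of `E = ∑ p_ℓ / (β - σ_ℓ²)²`, once `B(β) = 0`
has replaced `∑ p_ℓ / (β - σ_ℓ²)` by `(cθ²)⁻¹`. -/
noncomputable def recoveryRatio (c θ β E : ℝ) : ℝ :=
  (1 - c * (β ^ 2 * E - 2 * β * (c * θ ^ 2)⁻¹ + 1)) /
    (c * (β + (1 - c) * θ ^ 2) * (c * θ ^ 2 * E))

theorem homoscedasticRecovery_eq (hc : c ≠ 0) (hθ : θ ≠ 0) (v : ℝ) :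
    homoscedasticRecovery c θ v = (c * θ ^ 4 - v ^ 2) / (c * θ ^ 2 * (θ ^ 2 + v)) := by
  unfold homoscedasticRecovery
  field_simp

theorem homoscedasticRecovery_antitoneOn (hc : 0 < c) (hθ : 0 < θ) :
    AntitoneOn (homoscedasticRecovery c θ) (Ici 0) := by
  intro u hu v hv huv
  have hθ2 : 0 < θ ^ 2 := by positivity
  rw [homoscedasticRecovery_eq hc.ne' hθ.ne', homoscedasticRecovery_eq hc.ne' hθ.ne',
    div_le_div_iff₀ (by positivity [hv.out]) (by positivity [hu.out])]
  nlinarith [mul_nonneg (mul_nonneg (sub_nonneg.2 huv) (mul_pos hc hθ2).le)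
    (by positivity [hu.out, hv.out] : 0 ≤ c * θ ^ 4 + θ ^ 2 * (u + v) + u * v)]

theorem homoscedasticRecovery_sub_recoveryRatio {β E : ℝ} (hc : c ≠ 0) (hθ : θ ≠ 0)
    (hE : E ≠ 0) :
    homoscedasticRecovery c θ (β - c * θ ^ 2) - recoveryRatio c θ β E =
      (θ ^ 2 + 2 * β - c * θ ^ 2) * ((c * θ ^ 2) ^ 2 * E - 1) /
        ((β + (1 - c) * θ ^ 2) * ((c * θ ^ 2) ^ 2 * E)) := by
  rw [homoscedasticRecovery_eq hc hθ,
    show θ ^ 2 + (β - c * θ ^ 2) = β + (1 - c) * θ ^ 2 by ring]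
  unfold recoveryRatio
  field_simp
  ring

theorem recoveryRatio_le {β E : ℝ} (hc : 0 < c) (hθ : 0 < θ) (hβ : c * θ ^ 2 < β)
    (hE : 1 ≤ (c * θ ^ 2) ^ 2 * E) :
    recoveryRatio c θ β E ≤ homoscedasticRecovery c θ (β - c * θ ^ 2) := by
  rw [← sub_nonneg, homoscedasticRecovery_sub_recoveryRatio hc.ne' hθ.ne'
    (right_ne_zero_of_mul (by linarith : (c * θ ^ 2) ^ 2 * E ≠ 0))]
  have : 0 < β + (1 - c) * θ ^ 2 := by nlinarith [sq_nonneg θ]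
  exact div_nonneg (mul_nonneg (by nlinarith [sq_nonneg θ]) (by linarith)) (by positivity)

theorem recoveryRatio_eq_iff {β E : ℝ} (hc : 0 < c) (hθ : 0 < θ) (hβ : c * θ ^ 2 < β)
    (hE : 1 ≤ (c * θ ^ 2) ^ 2 * E) :
    recoveryRatio c θ β E = homoscedasticRecovery c θ (β - c * θ ^ 2) ↔
      (c * θ ^ 2) ^ 2 * E = 1 := by
  have : 0 < β + (1 - c) * θ ^ 2 := by nlinarith [sq_nonneg θ]
  have hnum : θ ^ 2 + 2 * β - c * θ ^ 2 ≠ 0 := by nlinarith [sq_nonneg θ]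
  have hden : (β + (1 - c) * θ ^ 2) * ((c * θ ^ 2) ^ 2 * E) ≠ 0 := by positivity
  rw [eq_comm, ← sub_eq_zero, homoscedasticRecovery_sub_recoveryRatio hc.ne' hθ.ne'
    (right_ne_zero_of_mul (by linarith : (c * θ ^ 2) ^ 2 * E ≠ 0)), div_eq_zero_iff, or_iff_left hden, mul_eq_zero,
    or_iff_right hnum, sub_eq_zero]

end Recovery

theorem coefficient_recovery_bound_general
    (c θ : ℝ) (hc : 0 < c) (hθ : 0 < θ)
    (L : ℕ) (p σ : Fin L → ℝ)
    (hp : ∀ ℓ, 0 < p ℓ) (hpsum : ∑ ℓ, p ℓ = 1)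
    (hσ : ∀ ℓ, 0 < σ ℓ)
    (σmax : ℝ) (hmaxle : ∀ ℓ, σ ℓ ≤ σmax)
    (A : ℝ → ℝ) (hA : ∀ x, A x = 1 - c * ∑ ℓ, p ℓ * (σ ℓ) ^ 2 / (x - σ ℓ) ^ 2)
    (B : ℝ → ℝ) (hB : ∀ x, B x = 1 - c * θ ^ 2 * ∑ ℓ, p ℓ / (x - σ ℓ))
    (β : ℝ) (hβmem : σmax < β) (hβroot : B β = 0)
    (B' : ℝ → ℝ) (hB' : ∀ x, B' x = c * θ ^ 2 * ∑ ℓ, p ℓ / (x - σ ℓ) ^ 2) :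
    θ ^ 2 < β + (1 - c) * θ ^ 2 ∧ (0:ℝ) < θ ^ 2 ∧
    A β / (c * (β + (1 - c) * θ ^ 2) * B' β) ≤
      (c - (∑ ℓ, p ℓ * σ ℓ) ^ 2 / θ ^ 4) / (c * (1 + (∑ ℓ, p ℓ * σ ℓ) / θ ^ 2)) ∧
    (A β / (c * (β + (1 - c) * θ ^ 2) * B' β) =
      (c - (∑ ℓ, p ℓ * σ ℓ) ^ 2 / θ ^ 4) / (c * (1 + (∑ ℓ, p ℓ * σ ℓ) / θ ^ 2)) ↔
      (∀ ℓ ℓ' : Fin L, σ ℓ = σ ℓ')) := by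
  have hσβ : ∀ ℓ, σ ℓ < β := fun ℓ => (hmaxle ℓ).trans_lt hβmem
  have hE₁ : ∑ ℓ, p ℓ / (β - σ ℓ) = (c * θ ^ 2)⁻¹ :=
    eq_inv_of_mul_eq_one_right (by rw [hB] at hβroot; linear_combination -hβroot)
  have hw : 0 < ∑ ℓ, p ℓ * σ ℓ :=
    sum_pos (fun ℓ _ => mul_pos (hp ℓ) (hσ ℓ)) (nonempty_of_sum_ne_zero (hpsum ▸ one_ne_zero))
  have hγw : c * θ ^ 2 ≤ β - ∑ ℓ, p ℓ * σ ℓ := by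
    simpa only [hE₁, inv_inv] using inv_sum_div_sub_le_sub_sum_mul hp hpsum hσβ
  have hβ : c * θ ^ 2 < β := by linarith
  have hE₂ := sq_sum_div_sub_le (σ := σ) (β := β) (fun ℓ => (hp ℓ).le) hpsum
  rw [hE₁, inv_pow, inv_le_iff_one_le_mul₀' (by positivity)] at hE₂
  have hhomo : (c * θ ^ 2) ^ 2 * ∑ ℓ, p ℓ / (β - σ ℓ) ^ 2 = 1 ↔ ∀ ℓ ℓ', σ ℓ = σ ℓ' := by
    rw [← sq_sum_div_sub_eq_iff hp hpsum, hE₁, inv_pow, mul_eq_one_iff_inv_eq₀ (by positivity)]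
  have hLHS : A β / (c * (β + (1 - c) * θ ^ 2) * B' β) =
      recoveryRatio c θ β (∑ ℓ, p ℓ / (β - σ ℓ) ^ 2) := by
    rw [hA, hB', sum_mul_sq_div_sub_sq hpsum fun ℓ => (sub_pos.2 (hσβ ℓ)).ne', hE₁]
    rfl
  have hmono :=
    homoscedasticRecovery_antitoneOn hc hθ hw.le (sub_nonneg.2 hβ.le) (le_sub_comm.1 hγw)
  change _ ∧ _ ∧ _ ≤ homoscedasticRecovery c θ (∑ ℓ, p ℓ * σ ℓ) ∧
    (_ = homoscedasticRecovery c θ (∑ ℓ, p ℓ * σ ℓ) ↔ _)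
  rw [hLHS, ← hhomo, ← recoveryRatio_eq_iff hc hθ hβ hE₂]
  refine ⟨by linarith, by positivity, (recoveryRatio_le hc hθ hβ hE₂).trans hmono,
    fun h => le_antisymm (recoveryRatio_le hc hθ hβ hE₂) (h ▸ hmono), fun h => ?_⟩
  have hw_eq := sub_sum_mul_eq_inv_sum_div (β := β) hpsum
    (hhomo.1 ((recoveryRatio_eq_iff hc hθ hβ hE₂).1 h))
  rw [hE₁, inv_inv] at hw_eq
  rw [h, ← hw_eq, sub_sub_cancel]

/-- if `A(β) ≥ 0` then `β + (1 − c)θ² > θ² > 0` and the asymptotic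
coefficient recovery satisfies
`A(β)/(c(β + (1 − c)θ²)B′(β)) ≤ (c − σ̄⁴/θ⁴)/(c(1 + σ̄²/θ²))`, with equality iff the
noise is homoscedastic. -/
theorem coefficient_recovery_bound
    (c θ : ℝ) (hc : 0 < c) (hθ : 0 < θ)
    (L : ℕ) (hL : 1 ≤ L) (p σ : Fin L → ℝ)
    (hp : ∀ ℓ, 0 < p ℓ) (hpsum : ∑ ℓ, p ℓ = 1)
    (hσ : ∀ ℓ, 0 < σ ℓ)
    (σmax : ℝ) (hmaxle : ∀ ℓ, σ ℓ ≤ σmax) (hmaxmem : ∃ ℓ, σ ℓ = σmax)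
    (A : ℝ → ℝ) (hA : ∀ x, A x = 1 - c * ∑ ℓ, p ℓ * (σ ℓ) ^ 2 / (x - σ ℓ) ^ 2)
    (B : ℝ → ℝ) (hB : ∀ x, B x = 1 - c * θ ^ 2 * ∑ ℓ, p ℓ / (x - σ ℓ))
    (β : ℝ) (hβmem : σmax < β) (hβroot : B β = 0)
    (B' : ℝ → ℝ) (hB' : ∀ x, B' x = c * θ ^ 2 * ∑ ℓ, p ℓ / (x - σ ℓ) ^ 2)
    (hAβ : 0 ≤ A β) :
    θ ^ 2 < β + (1 - c) * θ ^ 2 ∧ (0:ℝ) < θ ^ 2 ∧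
    A β / (c * (β + (1 - c) * θ ^ 2) * B' β) ≤
      (c - (∑ ℓ, p ℓ * σ ℓ) ^ 2 / θ ^ 4) / (c * (1 + (∑ ℓ, p ℓ * σ ℓ) / θ ^ 2)) ∧
    (A β / (c * (β + (1 - c) * θ ^ 2) * B' β) =
      (c - (∑ ℓ, p ℓ * σ ℓ) ^ 2 / θ ^ 4) / (c * (1 + (∑ ℓ, p ℓ * σ ℓ) / θ ^ 2)) ↔
      (∀ ℓ ℓ' : Fin L, σ ℓ = σ ℓ')) :=
  coefficient_recovery_bound_general c θ hc hθ L p σ hp hpsum hσ σmax hmaxle A hA B hB β hβmem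
    hβroot B' hB'
end
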